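/- Let μ be a finite complex Borel measure with compact support in ℝⁿ and let F(ζ) = ∫_{ℝⁿ} e^{−i ζ·y} dμ(y) be its Fourier–Laplace transform, an entire function on ℂⁿ. Then for every polynomial φ on ℂⁿ, every z ∈ ℂⁿ and every t ∈ ℂ, ∫_{ℝⁿ} φ(z+ty) dμ(y) = (F(it∂_z)φ)(z), where F(it∂_z) is defined by substituting it∂_{z_k} for ζ_k in the power series expansion of F. -/

import Mathlib

open MeasureTheory MvPolynomial

/-- The monomial derivative `∂^α` on polynomials. -/
noncomputable def mderiv {n : ℕ} (α : Fin n →₀ ℕ) (φ : MvPolynomial (Fin n) ℂ) :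
    MvPolynomial (Fin n) ℂ :=
  (List.finRange n).foldr (fun k ψ => (fun χ => MvPolynomial.pderiv k χ)^[α k] ψ) φ

/-- The integral of a complex-valued function against the complex measure
`μ₁ - μ₂ + i(μ₃ - μ₄)`. -/
noncomputable def cInt {n : ℕ} (μ₁ μ₂ μ₃ μ₄ : Measure (Fin n → ℝ))
    (f : (Fin n → ℝ) → ℂ) : ℂ :=
  (∫ y, f y ∂μ₁) - (∫ y, f y ∂μ₂) + Complex.I * ((∫ y, f y ∂μ₃) - (∫ y, f y ∂μ₄))

/-! Taylor's formula `φ(z + w) = ∑_α w^α / α! · ∂^α φ(z)` is a finite identity for a polynomial `φ`;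
for a monomial it is the binomial theorem in each variable, since
`∂^α z^γ = γ!/(γ-α)! · z^(γ-α)`. Substituting `w = t y` and integrating term by term against `μ`
gives `∑_α t^|α| / α! · (∫ y^α dμ) · ∂^α φ(z)`. Integrating term by term is legitimate because
each monomial `y^α` is continuous, hence integrable against a finite measure carried by a compact
ball. -/

open Finset

theorem Finset.prod_add_pow_eq_sum_Iic {ι R : Type*} [Fintype ι] [DecidableEq ι] [CommSemiring R]
    (a b : ι → R) (γ : ι →₀ ℕ) :
    ∏ k, (a k + b k) ^ γ k =
      ∑ α ∈ Iic γ, ∏ k, a k ^ α k * b k ^ (γ k - α k) * (γ k).choose (α k) := by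
  simp_rw [add_pow, prod_univ_sum]
  exact (sum_equiv Finsupp.equivFunOnFinite
    (fun α => by simp [Finsupp.le_def]) (fun _ _ => rfl)).symm

theorem MeasureTheory.Integrable.of_continuous_of_measure_compl_eq_zero {X E : Type*}
    [TopologicalSpace X] [T2Space X] [MeasurableSpace X] [OpensMeasurableSpace X]
    [NormedAddCommGroup E] {ν : Measure X} [IsFiniteMeasure ν] {K : Set X} (hK : IsCompact K)
    (hν : ν Kᶜ = 0) {f : X → E} (hf : Continuous f) : Integrable f ν := by
  rw [← Measure.restrict_eq_self_of_ae_mem (mem_ae_iff.mpr hν)]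
  exact hf.continuousOn.integrableOn_compact hK

namespace MvPolynomial

variable {R σ : Type*} [CommSemiring R]

theorem iterate_pderiv_monomial (k : σ) (m : ℕ) (γ : σ →₀ ℕ) (c : R) :
    (fun χ => pderiv k χ)^[m] (monomial γ c) =
      monomial (γ - Finsupp.single k m) ((γ k).descFactorial m * c) := by
  induction m with
  | zero => simp
  | succ m ih =>
    rw [Function.iterate_succ_apply', ih, pderiv_monomial, tsub_tsub, ← Finsupp.single_add,
      Finsupp.tsub_apply, Finsupp.single_eq_same, Nat.descFactorial_succ]
    congr 1
    push_cast
    ring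

theorem foldr_iterate_pderiv_eq_prod (l : List σ) (α : σ →₀ ℕ) (φ : MvPolynomial σ R) :
    l.foldr (fun k ψ => (fun χ => pderiv k χ)^[α k] ψ) φ =
      (l.map fun k => (pderiv k : Derivation R _ _).toLinearMap ^ α k).prod φ := by
  induction l with
  | nil => rfl
  | cons k l ih =>
    rw [List.foldr_cons, ih, List.map_cons, List.prod_cons, Module.End.mul_apply,
      Module.End.pow_apply]
    rfl

theorem foldr_iterate_pderiv_monomial [DecidableEq σ] (α γ : σ →₀ ℕ) (c : R) {l : List σ}
    (hl : l.Nodup) :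
    l.foldr (fun k ψ => (fun χ => pderiv k χ)^[α k] ψ) (monomial γ c) =
      monomial (γ - ∑ k ∈ l.toFinset, Finsupp.single k (α k))
        ((∏ k ∈ l.toFinset, ((γ k).descFactorial (α k) : R)) * c) := by
  induction l with
  | nil => simp
  | cons k l ih =>
    obtain ⟨hk, hl⟩ := List.nodup_cons.mp hl
    have hγk : (γ - ∑ j ∈ l.toFinset, Finsupp.single j (α j)) k = γ k := by
      rw [Finsupp.tsub_apply, Finsupp.finsetSum_apply,
        sum_eq_zero fun j hj => Finsupp.single_eq_of_ne (by rintro rfl; simp_all), Nat.sub_zero]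
    rw [List.foldr_cons, ih hl, iterate_pderiv_monomial, hγk, List.toFinset_cons,
      sum_insert (by simpa using hk), prod_insert (by simpa using hk), tsub_tsub, add_comm,
      mul_assoc]

end MvPolynomial

section mderiv

variable {n : ℕ}

theorem mderiv_monomial (α γ : Fin n →₀ ℕ) (c : ℂ) :
    mderiv α (monomial γ c) =
      monomial (γ - α) ((∏ k, ((γ k).descFactorial (α k) : ℂ)) * c) := by
  rw [mderiv, foldr_iterate_pderiv_monomial _ _ _ (List.nodup_finRange n),
    List.toFinset_finRange, Finsupp.univ_sum_single]

theorem mderiv_monomial_eq_zero {α γ : Fin n →₀ ℕ} (h : ¬α ≤ γ) (c : ℂ) :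
    mderiv α (monomial γ c) = 0 := by
  obtain ⟨k, hk⟩ : ∃ k, γ k < α k := by simpa [Finsupp.le_def] using h
  rw [mderiv_monomial,
    prod_eq_zero (mem_univ k) (by simp [Nat.descFactorial_eq_zero_iff_lt.mpr hk]), zero_mul,
    map_zero]

theorem mderiv_finsetSum {ι : Type*} (α : Fin n →₀ ℕ) (s : Finset ι)
    (f : ι → MvPolynomial (Fin n) ℂ) :
    mderiv α (∑ i ∈ s, f i) = ∑ i ∈ s, mderiv α (f i) := by
  simp only [mderiv, foldr_iterate_pderiv_eq_prod, map_sum]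

theorem mderiv_eq_zero_of_not_le (φ : MvPolynomial (Fin n) ℂ) {α : Fin n →₀ ℕ}
    (hα : ¬α ≤ φ.support.sup id) : mderiv α φ = 0 := by
  rw [← support_sum_monomial_coeff φ, mderiv_finsetSum]
  exact sum_eq_zero fun γ hγ =>
    mderiv_monomial_eq_zero (fun h => hα (h.trans (le_sup (f := id) hγ))) _

theorem eval_add_monomial_eq_sum_mderiv (γ : Fin n →₀ ℕ) (c : ℂ) (z w : Fin n → ℂ) :
    eval (fun k => z k + w k) (monomial γ c) =
      ∑ α ∈ Iic γ, (∏ k, w k ^ α k / (α k).factorial) * eval z (mderiv α (monomial γ c)) := by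
  rw [eval_monomial, Finsupp.prod_fintype _ _ fun _ => pow_zero _]
  simp_rw [add_comm (z _), prod_add_pow_eq_sum_Iic, mul_sum]
  refine sum_congr rfl fun α _ => ?_
  rw [mderiv_monomial, eval_monomial, Finsupp.prod_fintype _ _ fun _ => pow_zero _]
  have hcoeff : ∀ k, w k ^ α k * z k ^ (γ k - α k) * ((γ k).choose (α k) : ℂ) =
      w k ^ α k / (α k).factorial * (γ k).descFactorial (α k) * z k ^ (γ k - α k) := by
    intro k
    have : ((α k).factorial : ℂ) ≠ 0 := Nat.cast_ne_zero.mpr (α k).factorial_ne_zero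
    rw [Nat.descFactorial_eq_factorial_mul_choose]
    push_cast
    field_simp
  simp only [Finsupp.coe_tsub, Pi.sub_apply, hcoeff, prod_mul_distrib]
  ring

theorem eval_add_eq_sum_mderiv (φ : MvPolynomial (Fin n) ℂ) (z w : Fin n → ℂ) :
    eval (fun k => z k + w k) φ =
      ∑ α ∈ Iic (φ.support.sup id),
        (∏ k, w k ^ α k / (α k).factorial) * eval z (mderiv α φ) := by
  have hsplit : ∀ α, mderiv α φ = ∑ γ ∈ φ.support, mderiv α (monomial γ (coeff γ φ)) := by
    intro α
    conv_lhs => rw [← support_sum_monomial_coeff φ]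
    exact mderiv_finsetSum _ _ _
  conv_lhs => rw [← support_sum_monomial_coeff φ]
  simp_rw [map_sum, eval_add_monomial_eq_sum_mderiv, hsplit, map_sum, mul_sum]
  rw [sum_comm]
  refine sum_congr rfl fun γ hγ => sum_subset (Iic_subset_Iic.mpr (le_sup (f := id) hγ)) ?_
  intro α _ hα
  rw [mderiv_monomial_eq_zero (by simpa using hα), map_zero, mul_zero]

end mderiv

section cInt

variable {n : ℕ} {μ₁ μ₂ μ₃ μ₄ : Measure (Fin n → ℝ)}

theorem cInt_const_mul (c : ℂ) (f : (Fin n → ℝ) → ℂ) :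
    cInt μ₁ μ₂ μ₃ μ₄ (fun y => c * f y) = c * cInt μ₁ μ₂ μ₃ μ₄ f := by
  simp only [cInt, integral_const_mul]
  ring

theorem cInt_finsetSum {ι : Type*} (s : Finset ι) (g : ι → (Fin n → ℝ) → ℂ)
    (hg₁ : ∀ i ∈ s, Integrable (g i) μ₁) (hg₂ : ∀ i ∈ s, Integrable (g i) μ₂)
    (hg₃ : ∀ i ∈ s, Integrable (g i) μ₃) (hg₄ : ∀ i ∈ s, Integrable (g i) μ₄) :
    cInt μ₁ μ₂ μ₃ μ₄ (fun y => ∑ i ∈ s, g i y) = ∑ i ∈ s, cInt μ₁ μ₂ μ₃ μ₄ (g i) := by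
  rw [cInt, integral_finsetSum s hg₁, integral_finsetSum s hg₂, integral_finsetSum s hg₃,
    integral_finsetSum s hg₄]
  simp only [cInt, sum_add_distrib, sum_sub_distrib, ← mul_sum]

end cInt

theorem stmt14_general {n : ℕ} (μ₁ μ₂ μ₃ μ₄ : Measure (Fin n → ℝ))
    (h₁ : IsFiniteMeasure μ₁) (h₂ : IsFiniteMeasure μ₂)
    (h₃ : IsFiniteMeasure μ₃) (h₄ : IsFiniteMeasure μ₄)
    (R : ℝ)
    (hc₁ : μ₁ (Metric.closedBall 0 R)ᶜ = 0) (hc₂ : μ₂ (Metric.closedBall 0 R)ᶜ = 0)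
    (hc₃ : μ₃ (Metric.closedBall 0 R)ᶜ = 0) (hc₄ : μ₄ (Metric.closedBall 0 R)ᶜ = 0) :
    ∀ (φ : MvPolynomial (Fin n) ℂ) (z : Fin n → ℂ) (t : ℂ),
      cInt μ₁ μ₂ μ₃ μ₄ (fun y => MvPolynomial.eval (fun k => z k + t * (y k : ℂ)) φ) =
        ∑' α : Fin n →₀ ℕ,
          (t ^ (∑ k : Fin n, α k) / (∏ k : Fin n, (Nat.factorial (α k) : ℂ))) *
            cInt μ₁ μ₂ μ₃ μ₄ (fun y => ∏ k : Fin n, ((y k : ℂ)) ^ (α k)) *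
            MvPolynomial.eval z (mderiv α φ) := by
  intro φ z t
  set c : (Fin n →₀ ℕ) → ℂ := fun α =>
    t ^ (∑ k, α k) / (∏ k, ((α k).factorial : ℂ)) * eval z (mderiv α φ)
  have hexpand : (fun y : Fin n → ℝ => eval (fun k => z k + t * y k) φ) =
      fun y => ∑ α ∈ Iic (φ.support.sup id), c α * ∏ k, (y k : ℂ) ^ α k := by
    funext y
    rw [eval_add_eq_sum_mderiv]
    refine sum_congr rfl fun α _ => ?_
    simp only [c, mul_pow, prod_div_distrib, prod_mul_distrib, prod_pow_eq_pow_sum]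
    ring
  have hint : ∀ ν : Measure (Fin n → ℝ), IsFiniteMeasure ν → ν (Metric.closedBall 0 R)ᶜ = 0 →
      ∀ α ∈ Iic (φ.support.sup id), Integrable (fun y => c α * ∏ k, (y k : ℂ) ^ α k) ν :=
    fun ν _ hν α _ => .of_continuous_of_measure_compl_eq_zero (isCompact_closedBall 0 R) hν
      (by fun_prop)
  rw [hexpand, cInt_finsetSum _ _ (hint μ₁ h₁ hc₁) (hint μ₂ h₂ hc₂) (hint μ₃ h₃ hc₃)
      (hint μ₄ h₄ hc₄),
    tsum_eq_sum (s := Iic (φ.support.sup id)) fun α hα => by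
      rw [mderiv_eq_zero_of_not_le φ (by simpa using hα), map_zero, mul_zero]]
  refine sum_congr rfl fun α _ => ?_
  rw [cInt_const_mul]
  ring

/-- Zalcman's lemma in the polynomial case: for a finite compactly supported complex
Borel measure `μ = μ₁ - μ₂ + i(μ₃ - μ₄)` on `ℝⁿ` with Fourier–Laplace transform `F`,
and for every polynomial `φ`, `∫ φ(z+ty) dμ(y) = (F(it∂_z)φ)(z)`, where
`F(it∂_z)φ = Σ_α (t^{|α|}/α!)(∫ y^α dμ) ∂^α φ`. -/
theorem stmt14 {n : ℕ} (μ₁ μ₂ μ₃ μ₄ : Measure (Fin n → ℝ))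
    (h₁ : IsFiniteMeasure μ₁) (h₂ : IsFiniteMeasure μ₂)
    (h₃ : IsFiniteMeasure μ₃) (h₄ : IsFiniteMeasure μ₄)
    (R : ℝ) (hR : 0 < R)
    (hc₁ : μ₁ (Metric.closedBall 0 R)ᶜ = 0) (hc₂ : μ₂ (Metric.closedBall 0 R)ᶜ = 0)
    (hc₃ : μ₃ (Metric.closedBall 0 R)ᶜ = 0) (hc₄ : μ₄ (Metric.closedBall 0 R)ᶜ = 0) :
    ∀ (φ : MvPolynomial (Fin n) ℂ) (z : Fin n → ℂ) (t : ℂ),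
      cInt μ₁ μ₂ μ₃ μ₄ (fun y => MvPolynomial.eval (fun k => z k + t * (y k : ℂ)) φ) =
        ∑' α : Fin n →₀ ℕ,
          (t ^ (∑ k : Fin n, α k) / (∏ k : Fin n, (Nat.factorial (α k) : ℂ))) *
            cInt μ₁ μ₂ μ₃ μ₄ (fun y => ∏ k : Fin n, ((y k : ℂ)) ^ (α k)) *
            MvPolynomial.eval z (mderiv α φ) :=
  stmt14_general μ₁ μ₂ μ₃ μ₄ h₁ h₂ h₃ h₄ R hc₁ hc₂ hc₃ hc₄
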